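/- arXiv:math/0506139 — 4 statements merged into one kernel-verified Lean document; each statement's English description precedes it below -/
import Mathlib

section
/- Let n ≥ 3, p, q > 1 with 1/(p+1) + 1/(q+1) > 1 − 2/n, and K, Q ∈ C¹(ℝⁿ) with α ≤ K(x) ≤ β and α ≤ Q(x) ≤ β for all x (α, β > 0). Assume that for every z ∈ ℝⁿ the set of ground pairs at z is nonempty and the infimum Σ(z) is attained. Then the ground energy function Σ is locally Lipschitz continuous on ℝⁿ, i.e., for every bounded set B ⊂ ℝⁿ there is L > 0 with |Σ(z₁) − Σ(z₂)| ≤ L |z₁ − z₂| for all z₁, z₂ ∈ B. -/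
open MeasureTheory Filter Topology

noncomputable section

abbrev Euc (n : ℕ) := EuclideanSpace ℝ (Fin n)

/-- The Laplacian: sum of second partial derivatives. -/
def lap {n : ℕ} (u : Euc n → ℝ) (x : Euc n) : ℝ :=
  ∑ i : Fin n, fderiv ℝ (fun y => fderiv ℝ u y (EuclideanSpace.single i 1)) x
    (EuclideanSpace.single i 1)

/-- A function together with its gradient decays exponentially at infinity. -/
def ExpDecay {n : ℕ} (u : Euc n → ℝ) : Prop :=
  ∃ c Θ : ℝ, 0 < c ∧ 0 < Θ ∧
    ∀ x, |u x| ≤ c * Real.exp (-Θ * ‖x‖) ∧ ‖gradient u x‖ ≤ c * Real.exp (-Θ * ‖x‖)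

/-- A ground pair at `z`: a pair of positive `C²` functions solving the limit system
`-Δu + u = Kz v^q`, `-Δv + v = Qz u^p`, decaying exponentially together with their gradients. -/
def IsGroundPair {n : ℕ} (p q Kz Qz : ℝ) (u v : Euc n → ℝ) : Prop :=
  ContDiff ℝ 2 u ∧ ContDiff ℝ 2 v ∧ (∀ x, 0 < u x) ∧ (∀ x, 0 < v x) ∧
  (∀ x, -lap u x + u x = Kz * v x ^ q) ∧ (∀ x, -lap v x + v x = Qz * u x ^ p) ∧
  ExpDecay u ∧ ExpDecay v

/-- The energy of a ground pair. -/
def energy {n : ℕ} (p q Kz Qz : ℝ) (u v : Euc n → ℝ) : ℝ :=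
  (1/2 - 1/(p+1)) * (∫ x, Qz * u x ^ (p+1)) + (1/2 - 1/(q+1)) * (∫ x, Kz * v x ^ (q+1))

/-- The ground energy function `Σ`. -/
def groundEnergy {n : ℕ} (p q : ℝ) (K Q : Euc n → ℝ) (z : Euc n) : ℝ :=
  sInf { e | ∃ u v : Euc n → ℝ, IsGroundPair p q (K z) (Q z) u v ∧
    e = energy p q (K z) (Q z) u v }

/-- The functional `f_ε`. -/
def fEps {n : ℕ} (p q ε : ℝ) (K Q u v : Euc n → ℝ) : ℝ :=
  (∫ x, (ε ^ 2 * (inner ℝ (gradient u x) (gradient v x) : ℝ) + u x * v x))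
    - (1/(q+1)) * (∫ x, K x * v x ^ (q+1)) - (1/(p+1)) * (∫ x, Q x * u x ^ (p+1))

/-- The concentration set at the (variable) energy level `lv`: points `z` at which a sequence of
finite-energy strong solutions of the singularly perturbed system concentrates, with rescaled
energies converging to `lv z`. -/
def ConcSet {n : ℕ} (p q : ℝ) (K Q : Euc n → ℝ) (lv : Euc n → ℝ) : Set (Euc n) :=
  { z | ∃ (ε : ℕ → ℝ) (u v : ℕ → Euc n → ℝ) (δ : ℝ), 0 < δ ∧
      (∀ h, 0 < ε h) ∧ Tendsto ε atTop (𝓝 0) ∧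
      (∀ h, ContDiff ℝ 2 (u h) ∧ ContDiff ℝ 2 (v h) ∧
        (∀ x, 0 < u h x) ∧ (∀ x, 0 < v h x) ∧
        (∀ x, -(ε h) ^ 2 * lap (u h) x + u h x = K x * v h x ^ q) ∧
        (∀ x, -(ε h) ^ 2 * lap (v h) x + v h x = Q x * u h x ^ p) ∧
        Integrable (fun x => (ε h) ^ 2 * (inner ℝ (gradient (u h) x) (gradient (v h) x) : ℝ)
          + u h x * v h x) ∧
        Integrable (fun x => K x * v h x ^ (q+1)) ∧
        Integrable (fun x => Q x * u h x ^ (p+1))) ∧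
      (∀ h, δ ≤ u h z ∧ δ ≤ v h z) ∧
      (∀ η : ℝ, 0 < η → ∃ R : ℝ, ∀ h x, R ≤ ‖x‖ →
        u h (z + ε h • x) ≤ η ∧ v h (z + ε h • x) ≤ η) ∧
      Tendsto (fun h => (ε h) ^ (-(n : ℝ)) * fEps p q (ε h) K Q (u h) (v h)) atTop (𝓝 (lv z)) }


section Helpers

lemma lap_const_mul {n : ℕ} {u : Euc n → ℝ} (hu : ContDiff ℝ 2 u) (c : ℝ) (x : Euc n) :
    lap (fun y => c * u y) x = c * lap u x := by
  unfold lap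
  rw [Finset.mul_sum]
  refine Finset.sum_congr rfl fun i _ => ?_
  have hdu : Differentiable ℝ u := hu.differentiable two_ne_zero
  have h1 : (fun y => fderiv ℝ (fun z => c * u z) y (EuclideanSpace.single i 1))
      = fun y => c * fderiv ℝ u y (EuclideanSpace.single i 1) := by
    funext y
    rw [fderiv_const_mul (hdu y)]
    rfl
  have hd2 : DifferentiableAt ℝ (fun y => fderiv ℝ u y (EuclideanSpace.single i 1)) x := by
    have h2 : ContDiff ℝ 1 (fderiv ℝ u) := hu.fderiv_right (by norm_num)
    exact ((ContinuousLinearMap.apply ℝ ℝ (EuclideanSpace.single i 1)).differentiable.comp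
      (h2.differentiable one_ne_zero)) x
  rw [h1, fderiv_const_mul hd2]
  rfl

lemma gradient_const_mul {n : ℕ} {u : Euc n → ℝ} {x : Euc n}
    (hu : DifferentiableAt ℝ u x) (c : ℝ) :
    gradient (fun y => c * u y) x = c • gradient u x := by
  unfold gradient
  rw [fderiv_const_mul hu, _root_.map_smul]

lemma abs_exp_sub_one_le' (x : ℝ) : |Real.exp x - 1| ≤ |x| * Real.exp |x| := by
  rcases le_or_gt 0 x with h | h
  · rw [abs_of_nonneg h,
      abs_of_nonneg (by nlinarith [Real.add_one_le_exp x] : (0:ℝ) ≤ Real.exp x - 1)]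
    have h2 := Real.add_one_le_exp (-x)
    have h3 : Real.exp (-x) * Real.exp x = 1 := by rw [← Real.exp_add]; simp
    nlinarith [Real.exp_pos x]
  · rw [abs_of_neg h,
      abs_of_nonpos (by nlinarith [Real.exp_lt_one_iff.mpr h] : Real.exp x - 1 ≤ 0)]
    have h2 := Real.add_one_le_exp x
    have h4 : 1 ≤ Real.exp (-x) := Real.one_le_exp (by linarith)
    nlinarith [Real.exp_pos x]

lemma abs_log_sub_log_le' {a b α : ℝ} (hα : 0 < α) (ha : α ≤ a) (hb : α ≤ b) :
    |Real.log a - Real.log b| ≤ |a - b| / α := by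
  wlog hab : b ≤ a generalizing a b
  · rw [abs_sub_comm, abs_sub_comm a b]; exact this hb ha (le_of_not_ge hab)
  have hb0 : 0 < b := lt_of_lt_of_le hα hb
  have ha0 : 0 < a := lt_of_lt_of_le hα ha
  have hd : Real.log a - Real.log b = Real.log (a / b) := (Real.log_div ha0.ne' hb0.ne').symm
  have h1 : 1 ≤ a / b := (one_le_div hb0).mpr hab
  rw [hd, abs_of_nonneg (Real.log_nonneg h1), abs_of_nonneg (by linarith)]
  have h2 := Real.log_le_sub_one_of_pos (show 0 < a/b by positivity)
  have h3 : a / b - 1 = (a - b) / b := by field_simp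
  have h4 : (a - b) / b ≤ (a - b) / α := by gcongr
  linarith [h2, h3 ▸ h2]

lemma ExpDecay_const_mul {n : ℕ} {u : Euc n → ℝ} (hu : Differentiable ℝ u) (hd : ExpDecay u)
    {lam : ℝ} (hlam : 0 < lam) : ExpDecay (fun x => lam * u x) := by
  obtain ⟨c, Θ, hc, hΘ, hb⟩ := hd
  refine ⟨lam * c, Θ, by positivity, hΘ, fun x => ⟨?_, ?_⟩⟩
  · rw [abs_mul, abs_of_pos hlam, mul_assoc]
    exact mul_le_mul_of_nonneg_left (hb x).1 hlam.le
  · rw [gradient_const_mul (hu x), norm_smul, Real.norm_eq_abs, abs_of_pos hlam, mul_assoc]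
    exact mul_le_mul_of_nonneg_left (hb x).2 hlam.le

lemma groundPair_scale {n : ℕ} {p q K₁ Q₁ K₂ Q₂ lam mu : ℝ} {u v : Euc n → ℝ}
    (hgp : IsGroundPair p q K₂ Q₂ u v) (hlam : 0 < lam) (hmu : 0 < mu)
    (h1 : lam * K₂ = K₁ * mu ^ q) (h2 : mu * Q₂ = Q₁ * lam ^ p) :
    IsGroundPair p q K₁ Q₁ (fun x => lam * u x) (fun x => mu * v x) := by
  obtain ⟨hu, hv, hup, hvp, he1, he2, hd1, hd2⟩ := hgp
  refine ⟨contDiff_const.mul hu, contDiff_const.mul hv,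
    fun x => by have := hup x; positivity, fun x => by have := hvp x; positivity, ?_, ?_,
    ExpDecay_const_mul (hu.differentiable two_ne_zero) hd1 hlam,
    ExpDecay_const_mul (hv.differentiable two_ne_zero) hd2 hmu⟩
  · intro x
    rw [lap_const_mul hu, Real.mul_rpow hmu.le (hvp x).le]
    linear_combination lam * (he1 x) + v x ^ q * h1
  · intro x
    rw [lap_const_mul hv, Real.mul_rpow hlam.le (hup x).le]
    linear_combination mu * (he2 x) + u x ^ p * h2

lemma energy_scale {n : ℕ} (p q K₁ Q₁ K₂ Q₂ lam mu : ℝ) (u v : Euc n → ℝ)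
    (hlam : 0 ≤ lam) (hmu : 0 ≤ mu) (hu : ∀ x, 0 ≤ u x) (hv : ∀ x, 0 ≤ v x)
    (hQ₂ : Q₂ ≠ 0) (hK₂ : K₂ ≠ 0) :
    energy p q K₁ Q₁ (fun x => lam * u x) (fun x => mu * v x)
      = (lam ^ (p+1) * Q₁ / Q₂) * ((1/2 - 1/(p+1)) * (∫ x, Q₂ * u x ^ (p+1)))
        + (mu ^ (q+1) * K₁ / K₂) * ((1/2 - 1/(q+1)) * (∫ x, K₂ * v x ^ (q+1))) := by
  unfold energy
  have e1 : (fun x => Q₁ * (lam * u x) ^ (p+1))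
      = fun x => (lam ^ (p+1) * Q₁ / Q₂) * (Q₂ * u x ^ (p+1)) := by
    funext x
    rw [Real.mul_rpow hlam (hu x)]
    field_simp
  have e2 : (fun x => K₁ * (mu * v x) ^ (q+1))
      = fun x => (mu ^ (q+1) * K₁ / K₂) * (K₂ * v x ^ (q+1)) := by
    funext x
    rw [Real.mul_rpow hmu (hv x)]
    field_simp
  have E1 : (∫ x, Q₁ * (lam * u x) ^ (p+1)) = (lam ^ (p+1) * Q₁ / Q₂) * ∫ x, Q₂ * u x ^ (p+1) := by
    rw [show (fun x => Q₁ * (lam * u x) ^ (p+1))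
        = fun x => (lam ^ (p+1) * Q₁ / Q₂) * (Q₂ * u x ^ (p+1)) from e1]
    exact MeasureTheory.integral_const_mul _ _
  have E2 : (∫ x, K₁ * (mu * v x) ^ (q+1)) = (mu ^ (q+1) * K₁ / K₂) * ∫ x, K₂ * v x ^ (q+1) := by
    rw [show (fun x => K₁ * (mu * v x) ^ (q+1))
        = fun x => (mu ^ (q+1) * K₁ / K₂) * (K₂ * v x ^ (q+1)) from e2]
    exact MeasureTheory.integral_const_mul _ _
  rw [E1, E2]
  ring

lemma energy_piece_nonneg {n : ℕ} {p Qz : ℝ} {u : Euc n → ℝ} (hp : 1 < p) (hQ : 0 ≤ Qz)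
    (hu : ∀ x, 0 ≤ u x) : 0 ≤ (1/2 - 1/(p+1)) * (∫ x : Euc n, Qz * u x ^ (p+1)) := by
  apply mul_nonneg
  · have h1 : 1/(p+1) ≤ 1/2 := by
      apply one_div_le_one_div_of_le <;> linarith
    linarith
  · exact integral_nonneg fun x => mul_nonneg hQ (Real.rpow_nonneg (hu x) _)

end Helpers

set_option maxHeartbeats 1000000 in
/-- **Theorem 2.6 (Pomponio–Squassina).** The ground energy function `Σ` is locally Lipschitz
continuous on `ℝⁿ`. -/
theorem groundEnergy_locallyLipschitz
    {n : ℕ} (hn : 3 ≤ n) (p q α β : ℝ)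
    (hp : 1 < p) (hq : 1 < q)
    (hsub : 1/(p+1) + 1/(q+1) > 1 - 2/(n : ℝ))
    (K Q : Euc n → ℝ) (hK : ContDiff ℝ 1 K) (hQ : ContDiff ℝ 1 Q)
    (hα : 0 < α) (hβ : 0 < β)
    (hKb : ∀ x, α ≤ K x ∧ K x ≤ β) (hQb : ∀ x, α ≤ Q x ∧ Q x ≤ β)
    (hattain : ∀ z : Euc n, ∃ u v : Euc n → ℝ,
      IsGroundPair p q (K z) (Q z) u v ∧ energy p q (K z) (Q z) u v = groundEnergy p q K Q z) :
    ∀ B : Set (Euc n), Bornology.IsBounded B → ∃ L : ℝ, 0 < L ∧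
      ∀ z₁ ∈ B, ∀ z₂ ∈ B,
        |groundEnergy p q K Q z₁ - groundEnergy p q K Q z₂| ≤ L * ‖z₁ - z₂‖ := by
  intro B hB
  have hKpos : ∀ z, 0 < K z := fun z => lt_of_lt_of_le hα (hKb z).1
  have hQpos : ∀ z, 0 < Q z := fun z => lt_of_lt_of_le hα (hQb z).1
  have hpq : (1:ℝ) < p * q := by nlinarith
  have hD : (0:ℝ) < p * q - 1 := by linarith
  set S : Euc n → Set ℝ := fun z => {e | ∃ u v : Euc n → ℝ,
    IsGroundPair p q (K z) (Q z) u v ∧ e = energy p q (K z) (Q z) u v} with hS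
  have hmem_nonneg : ∀ z, ∀ e ∈ S z, (0:ℝ) ≤ e := by
    rintro z e ⟨u, v, hgp, rfl⟩
    have h1 := energy_piece_nonneg (n := n) (u := u) hp (hQpos z).le (fun x => (hgp.2.2.1 x).le)
    have h2 := energy_piece_nonneg (n := n) (u := v) hq (hKpos z).le (fun x => (hgp.2.2.2.1 x).le)
    unfold energy
    linarith
  have hbdd : ∀ z, BddBelow (S z) := fun z => ⟨0, fun e he => hmem_nonneg z e he⟩
  have hne : ∀ z, (S z).Nonempty := fun z => by
    obtain ⟨u, v, hgp, _⟩ := hattain z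
    exact ⟨_, u, v, hgp, rfl⟩
  have hSdef : ∀ z, groundEnergy p q K Q z = sInf (S z) := fun z => rfl
  have hS0 : ∀ z, 0 ≤ groundEnergy p q K Q z := fun z => by
    rw [hSdef z]; exact le_csInf (hne z) (hmem_nonneg z)
  set c : ℝ := (p+1)*(1+q)/(p*q-1) + (q+1)*(1 + p*(1+q)/(p*q-1)) + 2 with hc
  have ht1 : 0 ≤ (p+1)*(1+q)/(p*q-1) := div_nonneg (by nlinarith) hD.le
  have ht2 : 0 ≤ (q+1)*(1 + p*(1+q)/(p*q-1)) :=
    mul_nonneg (by linarith)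
      (by have := div_nonneg (show (0:ℝ) ≤ p*(1+q) by nlinarith) hD.le; linarith)
  have hcpos : 0 < c := by rw [hc]; linarith
  clear_value c
  have key : ∀ z₁ z₂ : Euc n, groundEnergy p q K Q z₁ ≤
      Real.exp (c * (|Real.log (K z₁) - Real.log (K z₂)| +
        |Real.log (Q z₁) - Real.log (Q z₂)|)) * groundEnergy p q K Q z₂ := by
    intro z₁ z₂
    obtain ⟨u, v, hgp, heq⟩ := hattain z₂
    set kd := Real.log (K z₁) - Real.log (K z₂) with hkd
    set qd := Real.log (Q z₁) - Real.log (Q z₂) with hqd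
    set d := |kd| + |qd| with hdd
    set l := -(kd + q*qd)/(p*q-1) with hl
    set m := qd + p*l with hm
    clear_value m l d qd kd
    have h1 : Real.exp l * K z₂ = K z₁ * Real.exp m ^ q := by
      rw [← Real.exp_mul]
      rw [← Real.exp_log (hKpos z₂)]
      nth_rewrite 1 [← Real.exp_log (hKpos z₁)]
      rw [← Real.exp_add, ← Real.exp_add, Real.exp_eq_exp, hm, hl, hqd, hkd]
      linear_combination div_mul_cancel₀ (Real.log (K z₁) - Real.log (K z₂) + q * (Real.log (Q z₁) - Real.log (Q z₂))) hD.ne'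
    have h2 : Real.exp m * Q z₂ = Q z₁ * Real.exp l ^ p := by
      rw [← Real.exp_mul]
      rw [← Real.exp_log (hQpos z₂)]
      nth_rewrite 1 [← Real.exp_log (hQpos z₁)]
      rw [← Real.exp_add, ← Real.exp_add, Real.exp_eq_exp, hm, hqd]
      ring
    have hgp' := groundPair_scale hgp (Real.exp_pos l) (Real.exp_pos m) h1 h2
    have hle : groundEnergy p q K Q z₁ ≤
        energy p q (K z₁) (Q z₁) (fun x => Real.exp l * u x) (fun x => Real.exp m * v x) := by
      rw [hSdef z₁]
      exact csInf_le (hbdd z₁) ⟨_, _, hgp', rfl⟩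
    rw [energy_scale p q (K z₁) (Q z₁) (K z₂) (Q z₂) _ _ u v (Real.exp_pos l).le
      (Real.exp_pos m).le (fun x => (hgp.2.2.1 x).le) (fun x => (hgp.2.2.2.1 x).le)
      (hQpos z₂).ne' (hKpos z₂).ne'] at hle
    set Ap := (1/2 - 1/(p+1)) * (∫ x, Q z₂ * u x ^ (p+1)) with hAp
    set Bp := (1/2 - 1/(q+1)) * (∫ x, K z₂ * v x ^ (q+1)) with hBp
    have hAnn : 0 ≤ Ap := energy_piece_nonneg hp (hQpos z₂).le (fun x => (hgp.2.2.1 x).le)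
    have hBnn : 0 ≤ Bp := energy_piece_nonneg hq (hKpos z₂).le (fun x => (hgp.2.2.2.1 x).le)
    have hAB : Ap + Bp = groundEnergy p q K Q z₂ := heq
    have cAe : Real.exp l ^ (p+1) * Q z₁ / Q z₂ = Real.exp (l*(p+1) + qd) := by
      rw [← Real.exp_mul, Real.exp_add, hqd, Real.exp_sub,
        Real.exp_log (hQpos z₁), Real.exp_log (hQpos z₂)]
      ring
    have cBe : Real.exp m ^ (q+1) * K z₁ / K z₂ = Real.exp (m*(q+1) + kd) := by
      rw [← Real.exp_mul, Real.exp_add, hkd, Real.exp_sub,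
        Real.exp_log (hKpos z₁), Real.exp_log (hKpos z₂)]
      ring
    have hkd0 : (0:ℝ) ≤ |kd| := abs_nonneg _
    have hqd0 : (0:ℝ) ≤ |qd| := abs_nonneg _
    have habs_l : |l| * (p*q - 1) ≤ |kd| + q * |qd| := by
      rw [hl, abs_div, abs_neg, abs_of_pos hD, div_mul_cancel₀ _ hD.ne']
      calc |kd + q*qd| ≤ |kd| + |q * qd| := abs_add_le _ _
        _ = |kd| + q * |qd| := by rw [abs_mul, abs_of_pos (by linarith : (0:ℝ) < q)]
    have hlb : |l| ≤ (1+q)/(p*q-1) * d := by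
      rw [div_mul_eq_mul_div, le_div_iff₀ hD, hdd]
      nlinarith [habs_l, abs_nonneg kd, abs_nonneg qd]
    have hmb : |m| ≤ (1 + p*(1+q)/(p*q-1)) * d := by
      have h5 : |m| ≤ |qd| + p * |l| := by
        rw [hm]
        calc |qd + p * l| ≤ |qd| + |p * l| := abs_add_le _ _
          _ = |qd| + p * |l| := by rw [abs_mul, abs_of_pos (by linarith : (0:ℝ) < p)]
      have h6 : p * |l| ≤ p * ((1+q)/(p*q-1) * d) :=
        mul_le_mul_of_nonneg_left hlb (by linarith)
      have h7 : |qd| ≤ d := by rw [hdd]; linarith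
      calc |m| ≤ d + p * ((1+q)/(p*q-1) * d) := by linarith
        _ = (1 + p*(1+q)/(p*q-1)) * d := by ring
    have hd0 : 0 ≤ d := by rw [hdd]; linarith
    have hXA : |l * (p+1) + qd| ≤ c * d := by
      have e0 : |l * (p+1) + qd| ≤ |l| * (p+1) + |qd| := by
        calc |l * (p+1) + qd| ≤ |l * (p+1)| + |qd| := abs_add_le _ _
          _ = |l| * (p+1) + |qd| := by rw [abs_mul, abs_of_pos (by linarith : (0:ℝ) < p+1)]
      have e1 : |l| * (p+1) ≤ (p+1)*(1+q)/(p*q-1) * d := by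
        calc |l| * (p+1) ≤ ((1+q)/(p*q-1) * d) * (p+1) :=
          mul_le_mul_of_nonneg_right hlb (by linarith)
          _ = (p+1)*(1+q)/(p*q-1) * d := by ring
      have e2 : |qd| ≤ 2 * d := by rw [hdd]; linarith
      have e3 : 0 ≤ (q+1)*(1 + p*(1+q)/(p*q-1)) * d := mul_nonneg ht2 hd0
      rw [hc]
      nlinarith [e0, e1, e2, e3]
    have hXB : |m * (q+1) + kd| ≤ c * d := by
      have e0 : |m * (q+1) + kd| ≤ |m| * (q+1) + |kd| := by
        calc |m * (q+1) + kd| ≤ |m * (q+1)| + |kd| := abs_add_le _ _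
          _ = |m| * (q+1) + |kd| := by rw [abs_mul, abs_of_pos (by linarith : (0:ℝ) < q+1)]
      have e1 : |m| * (q+1) ≤ (q+1)*(1 + p*(1+q)/(p*q-1)) * d := by
        calc |m| * (q+1) ≤ ((1 + p*(1+q)/(p*q-1)) * d) * (q+1) :=
          mul_le_mul_of_nonneg_right hmb (by linarith)
          _ = (q+1)*(1 + p*(1+q)/(p*q-1)) * d := by ring
      have e2 : |kd| ≤ 2 * d := by rw [hdd]; linarith
      have e3 : 0 ≤ (p+1)*(1+q)/(p*q-1) * d := mul_nonneg ht1 hd0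
      rw [hc]
      nlinarith [e0, e1, e2, e3]
    have hcA : Real.exp l ^ (p+1) * Q z₁ / Q z₂ ≤ Real.exp (c * d) := by
      rw [cAe]
      exact Real.exp_le_exp.mpr ((le_abs_self _).trans hXA)
    have hcB : Real.exp m ^ (q+1) * K z₁ / K z₂ ≤ Real.exp (c * d) := by
      rw [cBe]
      exact Real.exp_le_exp.mpr ((le_abs_self _).trans hXB)
    calc groundEnergy p q K Q z₁
        ≤ (Real.exp l ^ (p+1) * Q z₁ / Q z₂) * Ap
          + (Real.exp m ^ (q+1) * K z₁ / K z₂) * Bp := hle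
      _ ≤ Real.exp (c * d) * Ap + Real.exp (c * d) * Bp :=
          add_le_add (mul_le_mul_of_nonneg_right hcA hAnn)
            (mul_le_mul_of_nonneg_right hcB hBnn)
      _ = Real.exp (c * d) * (Ap + Bp) := by ring
      _ = Real.exp (c * d) * groundEnergy p q K Q z₂ := by rw [hAB]
  -- global bound on the log-distance
  have hlogK : ∀ z, Real.log α ≤ Real.log (K z) ∧ Real.log (K z) ≤ Real.log β := fun z =>
    ⟨Real.log_le_log hα (hKb z).1, Real.log_le_log (hKpos z) (hKb z).2⟩
  have hlogQ : ∀ z, Real.log α ≤ Real.log (Q z) ∧ Real.log (Q z) ≤ Real.log β := fun z =>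
    ⟨Real.log_le_log hα (hQb z).1, Real.log_le_log (hQpos z) (hQb z).2⟩
  set D0 : ℝ := 2*(Real.log β - Real.log α) with hD0
  have hd_glob : ∀ z₁ z₂ : Euc n, |Real.log (K z₁) - Real.log (K z₂)| +
      |Real.log (Q z₁) - Real.log (Q z₂)| ≤ D0 := by
    intro z₁ z₂
    have g1 : |Real.log (K z₁) - Real.log (K z₂)| ≤ Real.log β - Real.log α := by
      rw [abs_sub_le_iff]
      exact ⟨by linarith [(hlogK z₁).1, (hlogK z₁).2, (hlogK z₂).1, (hlogK z₂).2],
        by linarith [(hlogK z₁).1, (hlogK z₁).2, (hlogK z₂).1, (hlogK z₂).2]⟩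
    have g2 : |Real.log (Q z₁) - Real.log (Q z₂)| ≤ Real.log β - Real.log α := by
      rw [abs_sub_le_iff]
      exact ⟨by linarith [(hlogQ z₁).1, (hlogQ z₁).2, (hlogQ z₂).1, (hlogQ z₂).2],
        by linarith [(hlogQ z₁).1, (hlogQ z₁).2, (hlogQ z₂).1, (hlogQ z₂).2]⟩
    rw [hD0]; linarith
  have hM : ∀ z, groundEnergy p q K Q z ≤ Real.exp (c*D0) * groundEnergy p q K Q 0 := by
    intro z
    refine (key z 0).trans (mul_le_mul_of_nonneg_right (Real.exp_le_exp.mpr ?_) (hS0 0))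
    exact mul_le_mul_of_nonneg_left (hd_glob z 0) hcpos.le
  set M : ℝ := Real.exp (c*D0) * groundEnergy p q K Q 0 with hMdef
  have hMnn : 0 ≤ M := mul_nonneg (Real.exp_pos _).le (hS0 0)
  -- Lipschitz constants for K and Q on a ball containing B
  obtain ⟨R, hR0, hRB⟩ := hB.subset_closedBall_lt 0 0
  have hsconv : Convex ℝ (Metric.closedBall (0:Euc n) R) := convex_closedBall _ _
  have hscomp : IsCompact (Metric.closedBall (0:Euc n) R) := isCompact_closedBall _ _
  obtain ⟨CK, hCK⟩ := hscomp.exists_bound_of_continuousOn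
    ((hK.continuous_fderiv one_ne_zero).continuousOn)
  obtain ⟨CQ, hCQ⟩ := hscomp.exists_bound_of_continuousOn
    ((hQ.continuous_fderiv one_ne_zero).continuousOn)
  have h0s : (0:Euc n) ∈ Metric.closedBall (0:Euc n) R := Metric.mem_closedBall_self hR0.le
  have hCK0 : 0 ≤ CK := le_trans (norm_nonneg _) (hCK 0 h0s)
  have hCQ0 : 0 ≤ CQ := le_trans (norm_nonneg _) (hCQ 0 h0s)
  have hKlip : ∀ z₁ ∈ B, ∀ z₂ ∈ B, |K z₁ - K z₂| ≤ CK * ‖z₁ - z₂‖ := by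
    intro z₁ h₁ z₂ h₂
    have := hsconv.norm_image_sub_le_of_norm_fderiv_le
      (fun x _ => hK.differentiable one_ne_zero x) hCK (hRB h₂) (hRB h₁)
    simpa [Real.norm_eq_abs] using this
  have hQlip : ∀ z₁ ∈ B, ∀ z₂ ∈ B, |Q z₁ - Q z₂| ≤ CQ * ‖z₁ - z₂‖ := by
    intro z₁ h₁ z₂ h₂
    have := hsconv.norm_image_sub_le_of_norm_fderiv_le
      (fun x _ => hQ.differentiable one_ne_zero x) hCQ (hRB h₂) (hRB h₁)
    simpa [Real.norm_eq_abs] using this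
  set L : ℝ := c * ((CK + CQ)/α) * Real.exp (c*D0) * M + 1 with hLdef
  have hL0 : 0 < L := by
    have : 0 ≤ c * ((CK + CQ)/α) * Real.exp (c*D0) * M :=
      mul_nonneg (mul_nonneg (mul_nonneg hcpos.le (div_nonneg (by linarith) hα.le))
        (Real.exp_pos _).le) hMnn
    rw [hLdef]; linarith
  refine ⟨L, hL0, ?_⟩
  have hmain : ∀ z₁ ∈ B, ∀ z₂ ∈ B,
      groundEnergy p q K Q z₁ - groundEnergy p q K Q z₂ ≤ L * ‖z₁ - z₂‖ := by
    intro z₁ h₁ z₂ h₂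
    set d := |Real.log (K z₁) - Real.log (K z₂)| + |Real.log (Q z₁) - Real.log (Q z₂)| with hdd
    have hd0 : 0 ≤ d := by rw [hdd]; positivity
    have hdle : d ≤ ((CK + CQ)/α) * ‖z₁ - z₂‖ := by
      have l1 : |Real.log (K z₁) - Real.log (K z₂)| ≤ |K z₁ - K z₂|/α :=
        abs_log_sub_log_le' hα (hKb z₁).1 (hKb z₂).1
      have l2 : |Real.log (Q z₁) - Real.log (Q z₂)| ≤ |Q z₁ - Q z₂|/α :=
        abs_log_sub_log_le' hα (hQb z₁).1 (hQb z₂).1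
      have l3 := hKlip z₁ h₁ z₂ h₂
      have l4 := hQlip z₁ h₁ z₂ h₂
      calc d ≤ (|K z₁ - K z₂| + |Q z₁ - Q z₂|)/α := by rw [hdd, add_div]; exact add_le_add l1 l2
        _ ≤ (CK * ‖z₁ - z₂‖ + CQ * ‖z₁ - z₂‖)/α := by gcongr
        _ = ((CK + CQ)/α) * ‖z₁ - z₂‖ := by ring
    have hdD0 : d ≤ D0 := hd_glob z₁ z₂
    have hkey := key z₁ z₂
    have step1 : groundEnergy p q K Q z₁ - groundEnergy p q K Q z₂
        ≤ (Real.exp (c*d) - 1) * groundEnergy p q K Q z₂ := by nlinarith [hS0 z₂]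
    have hcd0 : 0 ≤ c*d := mul_nonneg hcpos.le hd0
    have step2 : Real.exp (c*d) - 1 ≤ (c*d) * Real.exp (c*d) := by
      have h := abs_exp_sub_one_le' (c*d)
      rw [abs_of_nonneg hcd0] at h
      exact le_trans (le_abs_self _) h
    have step3 : Real.exp (c*d) ≤ Real.exp (c*D0) :=
      Real.exp_le_exp.mpr (mul_le_mul_of_nonneg_left hdD0 hcpos.le)
    have hSM : groundEnergy p q K Q z₂ ≤ M := hM z₂
    have step4 : (Real.exp (c*d) - 1) * groundEnergy p q K Q z₂
        ≤ ((c*d) * Real.exp (c*D0)) * M := by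
      have s1 : (Real.exp (c*d) - 1) * groundEnergy p q K Q z₂
          ≤ ((c*d) * Real.exp (c*d)) * groundEnergy p q K Q z₂ :=
        mul_le_mul_of_nonneg_right step2 (hS0 z₂)
      have s2 : ((c*d) * Real.exp (c*d)) * groundEnergy p q K Q z₂
          ≤ ((c*d) * Real.exp (c*D0)) * M := by
        apply mul_le_mul (mul_le_mul_of_nonneg_left step3 hcd0) hSM (hS0 z₂)
        exact mul_nonneg hcd0 (Real.exp_pos _).le
      linarith
    have step5 : ((c*d) * Real.exp (c*D0)) * M
        ≤ ((c * (((CK + CQ)/α) * ‖z₁ - z₂‖)) * Real.exp (c*D0)) * M := by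
      apply mul_le_mul_of_nonneg_right (mul_le_mul_of_nonneg_right ?_ (Real.exp_pos _).le) hMnn
      exact mul_le_mul_of_nonneg_left hdle hcpos.le
    have step6 : ((c * (((CK + CQ)/α) * ‖z₁ - z₂‖)) * Real.exp (c*D0)) * M
        = (c * ((CK + CQ)/α) * Real.exp (c*D0) * M) * ‖z₁ - z₂‖ := by ring
    have step7 : (c * ((CK + CQ)/α) * Real.exp (c*D0) * M) * ‖z₁ - z₂‖ ≤ L * ‖z₁ - z₂‖ := by
      apply mul_le_mul_of_nonneg_right ?_ (norm_nonneg _)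
      rw [hLdef]; linarith
    calc groundEnergy p q K Q z₁ - groundEnergy p q K Q z₂
        ≤ (Real.exp (c*d) - 1) * groundEnergy p q K Q z₂ := step1
      _ ≤ ((c*d) * Real.exp (c*D0)) * M := step4
      _ ≤ ((c * (((CK + CQ)/α) * ‖z₁ - z₂‖)) * Real.exp (c*D0)) * M := step5
      _ = (c * ((CK + CQ)/α) * Real.exp (c*D0) * M) * ‖z₁ - z₂‖ := step6
      _ ≤ L * ‖z₁ - z₂‖ := step7
  intro z₁ h₁ z₂ h₂
  rw [abs_sub_le_iff]
  refine ⟨hmain z₁ h₁ z₂ h₂, ?_⟩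
  rw [norm_sub_rev]
  exact hmain z₂ h₂ z₁ h₁
end
end

section
/- Let p, q > 1 and let a, b ≥ 0 with a + b > 0 and c > 0. Define φ : (0,∞) → ℝ by φ(t) = a t^{(p+1)/p} + b t^{(q+1)/q} − (c/2) t². Then φ(t) > 0 for all sufficiently small t > 0, φ(t) < 0 for all sufficiently large t, and there exists a unique t₀ > 0 at which φ attains its maximum over (0,∞); moreover t₀ is the unique critical point of φ in (0,∞). -/
/-!
Write `φ` for the fibering map and `α, β ∈ (1, 2)` for its exponents. For `t > 0`,
`φ t = t² g t` and `φ' t = t h t`, where `g` and `h` are both of the form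
`A t^e₁ + B t^e₂ - C` with `A, B ≥ 0`, `A + B > 0`, `e₁, e₂ < 0` and `C > 0`. Such a function
is strictly decreasing on `(0, ∞)`, from `+∞` at `0⁺` to `-C` at `∞`, so it has exactly one zero
there and changes sign at it. The zero of `g` separates `φ > 0` from `φ < 0`; the zero of `h` is
the only critical point of `φ`, where `φ'` changes from positive to negative, hence the maximum.
-/

open Real Set Filter Topology

noncomputable def rpowComb (A B e₁ e₂ C t : ℝ) : ℝ := A * t ^ e₁ + B * t ^ e₂ - C

section rpowComb

variable {A B e₁ e₂ C : ℝ}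

theorem continuousOn_rpowComb : ContinuousOn (rpowComb A B e₁ e₂ C) (Ioi 0) := by
  intro t ht
  have hcont (e : ℝ) : ContinuousAt (fun s : ℝ => s ^ e) t :=
    continuousAt_rpow_const t e (Or.inl ht.ne')
  exact (((hcont e₁).const_mul A).add ((hcont e₂).const_mul B)).sub continuousAt_const
    |>.continuousWithinAt

variable (hA : 0 ≤ A) (hB : 0 ≤ B) (hAB : 0 < A + B) (he₁ : e₁ < 0) (he₂ : e₂ < 0)
include hA hB hAB he₁ he₂

theorem strictAntiOn_rpowComb : StrictAntiOn (rpowComb A B e₁ e₂ C) (Ioi 0) := by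
  intro x hx y _ hxy
  have h₁ : y ^ e₁ < x ^ e₁ := rpow_lt_rpow_of_neg hx hxy he₁
  have h₂ : y ^ e₂ < x ^ e₂ := rpow_lt_rpow_of_neg hx hxy he₂
  unfold rpowComb
  rcases hA.eq_or_lt with rfl | hA
  · linarith [mul_lt_mul_of_pos_left h₂ (by linarith : 0 < B)]
  · linarith [mul_lt_mul_of_pos_left h₁ hA, mul_le_mul_of_nonneg_left h₂.le hB]

theorem tendsto_rpowComb_nhdsGT_zero :
    Tendsto (rpowComb A B e₁ e₂ C) (𝓝[>] 0) atTop := by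
  suffices Tendsto (fun t : ℝ => A * t ^ e₁ + B * t ^ e₂) (𝓝[>] 0) atTop by
    exact (this.atTop_add tendsto_const_nhds).congr fun t => (sub_eq_add_neg _ C).symm
  rcases hA.eq_or_lt with rfl | hA
  · simpa using (tendsto_rpow_neg_nhdsGT_zero he₂).const_mul_atTop (by linarith : 0 < B)
  · refine tendsto_atTop_mono' _ ?_ ((tendsto_rpow_neg_nhdsGT_zero he₁).const_mul_atTop hA)
    filter_upwards [self_mem_nhdsWithin] with t (ht : 0 < t)
    exact le_add_of_nonneg_right (by positivity)

end rpowComb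

theorem tendsto_rpowComb_atTop {A B e₁ e₂ C : ℝ} (he₁ : e₁ < 0) (he₂ : e₂ < 0) :
    Tendsto (rpowComb A B e₁ e₂ C) atTop (𝓝 (-C)) := by
  have hdecay {e : ℝ} (he : e < 0) : Tendsto (fun t : ℝ => t ^ e) atTop (𝓝 0) := by
    simpa using tendsto_rpow_neg_atTop (neg_pos.2 he)
  have := (((hdecay he₁).const_mul A).add ((hdecay he₂).const_mul B)).sub_const C
  rwa [mul_zero, mul_zero, add_zero, zero_sub] at this

theorem exists_rpowComb_eq_zero {A B e₁ e₂ C : ℝ} (hA : 0 ≤ A) (hB : 0 ≤ B) (hAB : 0 < A + B)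
    (he₁ : e₁ < 0) (he₂ : e₂ < 0) (hC : 0 < C) :
    ∃ t₀, 0 < t₀ ∧ rpowComb A B e₁ e₂ C t₀ = 0 := by
  obtain ⟨s, hs_pos, hs⟩ : ∃ s, 0 < rpowComb A B e₁ e₂ C s ∧ s ∈ Ioi (0 : ℝ) :=
    ((tendsto_rpowComb_nhdsGT_zero hA hB hAB he₁ he₂).eventually_gt_atTop 0
      |>.and self_mem_nhdsWithin).exists
  obtain ⟨T, hT_neg, hT⟩ : ∃ T, rpowComb A B e₁ e₂ C T < 0 ∧ T ∈ Ioi (0 : ℝ) :=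
    ((tendsto_rpowComb_atTop he₁ he₂).eventually_lt_const (neg_neg_of_pos hC)
      |>.and (eventually_gt_atTop 0)).exists
  exact isPreconnected_Ioi.intermediate_value hT hs continuousOn_rpowComb ⟨hT_neg.le, hs_pos.le⟩

theorem isMaxOn_Ioi_of_deriv_pos_of_deriv_neg {f : ℝ → ℝ} {a t₀ : ℝ} (ht₀ : a < t₀)
    (hf : ContinuousOn f (Ioi a)) (hpos : ∀ t ∈ Ioo a t₀, 0 < deriv f t)
    (hneg : ∀ t ∈ Ioi t₀, deriv f t < 0) : IsMaxOn f (Ioi a) t₀ := by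
  intro t (ht : a < t)
  rcases le_total t t₀ with htt₀ | ht₀t
  · have hmono : StrictMonoOn f (Ioc a t₀) :=
      strictMonoOn_of_deriv_pos (convex_Ioc a t₀) (hf.mono Ioc_subset_Ioi_self)
        (by rwa [interior_Ioc])
    exact hmono.monotoneOn ⟨ht, htt₀⟩ ⟨ht₀, le_rfl⟩ htt₀
  · have hanti : StrictAntiOn f (Ici t₀) :=
      strictAntiOn_of_deriv_neg (convex_Ici t₀) (hf.mono (Ici_subset_Ioi.2 ht₀))
        (by rwa [interior_Ici])
    exact hanti.antitoneOn self_mem_Ici ht₀t ht₀t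

noncomputable def fiberingMap (a b α β c t : ℝ) : ℝ := a * t ^ α + b * t ^ β - c / 2 * t ^ (2 : ℕ)

section fiberingMap

variable {a b α β c t : ℝ}

theorem fiberingMap_eq_sq_mul (ht : 0 < t) :
    fiberingMap a b α β c t = t ^ 2 * rpowComb a b (α - 2) (β - 2) (c / 2) t := by
  have hsplit (e : ℝ) : t ^ e = t ^ 2 * t ^ (e - 2) := by
    rw [← rpow_natCast, ← rpow_add ht]; norm_num
  rw [fiberingMap, rpowComb, hsplit α, hsplit β]
  ring

theorem hasDerivAt_fiberingMap (ht : 0 < t) :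
    HasDerivAt (fiberingMap a b α β c) (t * rpowComb (a * α) (b * β) (α - 2) (β - 2) c t) t := by
  have hpow (e : ℝ) : HasDerivAt (fun s : ℝ => s ^ e) (t * (e * t ^ (e - 2))) t := by
    convert hasDerivAt_rpow_const (p := e) (Or.inl ht.ne') using 1
    rw [show e - 1 = 1 + (e - 2) by ring, rpow_add ht, rpow_one]
    ring
  refine ((((hpow α).const_mul a).add ((hpow β).const_mul b)).sub
    ((hasDerivAt_pow 2 t).const_mul (c / 2))).congr_deriv ?_
  rw [rpowComb]
  ring

variable (ha : 0 ≤ a) (hb : 0 ≤ b) (hab : 0 < a + b) (hc : 0 < c) (hα₂ : α < 2) (hβ₂ : β < 2)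
include ha hb hab hc hα₂ hβ₂

theorem exists_fiberingMap_sign_change : ∃ t₁, 0 < t₁ ∧ ∀ t, 0 < t →
    (0 < fiberingMap a b α β c t ↔ t < t₁) ∧ (fiberingMap a b α β c t < 0 ↔ t₁ < t) := by
  have he₁ : α - 2 < 0 := sub_neg.2 hα₂
  have he₂ : β - 2 < 0 := sub_neg.2 hβ₂
  obtain ⟨t₁, ht₁, hzero⟩ := exists_rpowComb_eq_zero ha hb hab he₁ he₂ (half_pos hc)
  have hanti := strictAntiOn_rpowComb (C := c / 2) ha hb hab he₁ he₂
  refine ⟨t₁, ht₁, fun t ht => ?_⟩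
  have hsq : 0 < t ^ 2 := by positivity
  have hpos := hanti.lt_iff_gt ht₁ ht
  have hneg := hanti.lt_iff_gt ht ht₁
  rw [hzero] at hpos hneg
  rw [fiberingMap_eq_sq_mul ht]
  exact ⟨(mul_pos_iff_of_pos_left hsq).trans hpos,
    by simpa only [mul_zero] using (mul_lt_mul_iff_of_pos_left hsq (c := 0)).trans hneg⟩

theorem exists_isMaxOn_fiberingMap (hα₀ : 0 < α) (hβ₀ : 0 < β) : ∃ t₀, 0 < t₀ ∧
    IsMaxOn (fiberingMap a b α β c) (Ioi 0) t₀ ∧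
    ∀ t, 0 < t → (deriv (fiberingMap a b α β c) t = 0 ↔ t = t₀) := by
  have hA : 0 ≤ a * α := mul_nonneg ha hα₀.le
  have hB : 0 ≤ b * β := mul_nonneg hb hβ₀.le
  have hAB : 0 < a * α + b * β := by
    rcases ha.eq_or_lt with rfl | ha
    · simpa using mul_pos (by linarith : 0 < b) hβ₀
    · exact add_pos_of_pos_of_nonneg (mul_pos ha hα₀) hB
  have he₁ : α - 2 < 0 := sub_neg.2 hα₂
  have he₂ : β - 2 < 0 := sub_neg.2 hβ₂
  obtain ⟨t₀, ht₀, hzero⟩ := exists_rpowComb_eq_zero hA hB hAB he₁ he₂ hc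
  have hanti := strictAntiOn_rpowComb (C := c) hA hB hAB he₁ he₂
  have hderiv {t : ℝ} (ht : 0 < t) :
      deriv (fiberingMap a b α β c) t = t * rpowComb (a * α) (b * β) (α - 2) (β - 2) c t :=
    (hasDerivAt_fiberingMap ht).deriv
  refine ⟨t₀, ht₀, isMaxOn_Ioi_of_deriv_pos_of_deriv_neg ht₀
    (fun t ht => (hasDerivAt_fiberingMap ht).continuousAt.continuousWithinAt) ?_ ?_, ?_⟩
  · rintro t ⟨ht, htt₀⟩
    rw [hderiv ht]
    exact mul_pos ht (hzero ▸ hanti ht ht₀ htt₀)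
  · intro t (htt₀ : t₀ < t)
    have ht := ht₀.trans htt₀
    rw [hderiv ht]
    exact mul_neg_of_pos_of_neg ht (hzero ▸ hanti ht₀ ht htt₀)
  · intro t ht
    rw [hderiv ht, mul_eq_zero, or_iff_right ht.ne', ← hzero, hanti.injOn.eq_iff ht ht₀]

end fiberingMap

/-- The fibering map `φ(t) = a t^{(p+1)/p} + b t^{(q+1)/q} - (c/2) t²` is positive for small
`t > 0`, negative for large `t`, and has a unique maximum point on `(0,∞)`, which is also its
unique critical point there. -/
theorem fibering_map_unique_maximum
    (p q a b c : ℝ) (hp : 1 < p) (hq : 1 < q)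
    (ha : 0 ≤ a) (hb : 0 ≤ b) (hab : 0 < a + b) (hc : 0 < c) :
    (∃ δ : ℝ, 0 < δ ∧ ∀ t : ℝ, 0 < t → t < δ →
      0 < a * t ^ ((p+1)/p) + b * t ^ ((q+1)/q) - c/2 * t ^ (2:ℕ)) ∧
    (∃ T : ℝ, ∀ t : ℝ, T < t →
      a * t ^ ((p+1)/p) + b * t ^ ((q+1)/q) - c/2 * t ^ (2:ℕ) < 0) ∧
    (∃! t₀ : ℝ, 0 < t₀ ∧
      (∀ t : ℝ, 0 < t →
        a * t ^ ((p+1)/p) + b * t ^ ((q+1)/q) - c/2 * t ^ (2:ℕ)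
          ≤ a * t₀ ^ ((p+1)/p) + b * t₀ ^ ((q+1)/q) - c/2 * t₀ ^ (2:ℕ)) ∧
      (∀ t : ℝ, 0 < t →
        (deriv (fun s : ℝ => a * s ^ ((p+1)/p) + b * s ^ ((q+1)/q) - c/2 * s ^ (2:ℕ)) t = 0
          ↔ t = t₀))) := by
  have hexp {r : ℝ} (hr : 1 < r) : 0 < (r + 1) / r ∧ (r + 1) / r < 2 := by
    have hr₀ : 0 < r := by linarith
    exact ⟨by positivity, by rw [div_lt_iff₀ hr₀]; linarith⟩
  obtain ⟨t₁, ht₁, hsign⟩ :=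
    exists_fiberingMap_sign_change ha hb hab hc (hexp hp).2 (hexp hq).2
  obtain ⟨t₀, ht₀, hmax, hcrit⟩ :=
    exists_isMaxOn_fiberingMap ha hb hab hc (hexp hp).2 (hexp hq).2 (hexp hp).1 (hexp hq).1
  refine ⟨⟨t₁, ht₁, fun t ht htt₁ => (hsign t ht).1.2 htt₁⟩,
    ⟨t₁, fun t htt₁ => (hsign t (ht₁.trans htt₁)).2.2 htt₁⟩,
    t₀, ⟨ht₀, fun t ht => hmax ht, hcrit⟩, ?_⟩
  rintro t' ⟨-, -, hcrit'⟩
  exact ((hcrit' t₀ ht₀).1 ((hcrit t₀ ht₀).2 rfl)).symm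
end

section
/- Let n ≥ 1, p, q > 1, β > 0, and let K, Q : ℝⁿ → ℝ satisfy 0 < K(x) ≤ β and 0 < Q(x) ≤ β for all x. Let (u,v) be a pair of positive C² functions on ℝⁿ solving −Δu + u = K(x) v^q and −Δv + v = Q(x) u^p, and suppose that both u and v attain a global maximum at the point 0. Then u(0) ≥ β^{−(q+1)/(pq−1)} and v(0) ≥ β^{−(p+1)/(pq−1)}. -/
open MeasureTheory Filter Topology

noncomputable section

/-!
At a common maximum point `0` the Laplacians of `u` and `v` are nonpositive (each second
directional derivative is), so the equations give `u 0 ≤ β * v 0 ^ q` and `v 0 ≤ β * u 0 ^ p`.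
In logarithms these are two linear inequalities, and since `p * q > 1` they combine to
`(p * q - 1) * log (u 0) ≥ -(q + 1) * log β`, and symmetrically for `v 0`.
-/

theorem IsLocalMax.deriv_deriv_nonpos {f : ℝ → ℝ} {a : ℝ} (hmax : IsLocalMax f a)
    (hf : ContinuousAt f a) : deriv (deriv f) a ≤ 0 := by
  by_contra! hpos
  -- The second-derivative test makes `a` a local minimum too, so `f` is locally constant.
  have hmin : IsLocalMin f a := isLocalMin_of_deriv_deriv_pos hpos hmax.deriv_eq_zero hf
  have hconst : f =ᶠ[𝓝 a] fun _ => f a := by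
    filter_upwards [hmax, hmin] with x hxmax hxmin using le_antisymm hxmax hxmin
  have hzero : deriv (deriv f) a = 0 := by
    rw [hconst.deriv.deriv_eq, deriv_const', deriv_const]
  exact hpos.ne' hzero

section LineRestriction

variable {E : Type*} [NormedAddCommGroup E] [NormedSpace ℝ E] {u : E → ℝ} {x e : E}

theorem hasDerivAt_add_smul (x e : E) (t : ℝ) : HasDerivAt (fun s : ℝ => x + s • e) e t := by
  simpa using ((hasDerivAt_id t).smul_const e).const_add x

theorem deriv_deriv_comp_add_smul (hu : ContDiff ℝ 2 u) :
    deriv (deriv fun t : ℝ => u (x + t • e)) 0 = fderiv ℝ (fun y => fderiv ℝ u y e) x e := by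
  have hderiv : deriv (fun t : ℝ => u (x + t • e)) = fun t => fderiv ℝ u (x + t • e) e :=
    funext fun t => ((hu.differentiable (by norm_num) _).hasFDerivAt.comp_hasDerivAt t
      (hasDerivAt_add_smul x e t)).deriv
  have hdu : ContDiff ℝ 1 fun y => fderiv ℝ u y e :=
    (hu.fderiv_right (m := 1) (by norm_num)).clm_apply contDiff_const
  rw [hderiv]
  simpa [Function.comp_def] using
    ((hdu.differentiable one_ne_zero _).hasFDerivAt.comp_hasDerivAt 0
      (hasDerivAt_add_smul x e 0)).deriv

theorem IsLocalMax.fderiv_fderiv_apply_self_nonpos (hmax : IsLocalMax u x)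
    (hu : ContDiff ℝ 2 u) : fderiv ℝ (fun y => fderiv ℝ u y e) x e ≤ 0 := by
  have hline : IsLocalMax (fun t : ℝ => u (x + t • e)) 0 :=
    IsLocalMax.comp_continuous (by simpa using hmax) (by fun_prop)
  rw [← deriv_deriv_comp_add_smul hu]
  exact hline.deriv_deriv_nonpos (hu.continuous.comp (by fun_prop)).continuousAt

end LineRestriction

theorem IsLocalMax.lap_nonpos {n : ℕ} {u : Euc n → ℝ} {x : Euc n} (hmax : IsLocalMax u x)
    (hu : ContDiff ℝ 2 u) : lap u x ≤ 0 :=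
  Finset.sum_nonpos fun _ _ => hmax.fderiv_fderiv_apply_self_nonpos hu

theorem rpow_neg_div_le_of_le_mul_rpow {p q β a b : ℝ} (hq : 0 ≤ q) (hpq : 1 < p * q)
    (hβ : 0 < β) (ha : 0 < a) (hb : 0 < b) (hab : a ≤ β * b ^ q) (hba : b ≤ β * a ^ p) :
    β ^ (-((q + 1) / (p * q - 1))) ≤ a := by
  have log_le {c d : ℝ} (r : ℝ) (hc : 0 < c) (hd : 0 < d) (h : c ≤ β * d ^ r) :
      Real.log c ≤ Real.log β + r * Real.log d := by
    rw [← Real.log_rpow hd, ← Real.log_mul hβ.ne' (by positivity)]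
    exact Real.log_le_log hc h
  have hlogab := log_le q ha hb hab
  have hlogba := log_le p hb ha hba
  rw [← Real.log_le_log_iff (by positivity) ha, Real.log_rpow hβ, neg_mul,
    div_mul_eq_mul_div, neg_le, le_div_iff₀ (by linarith)]
  nlinarith [mul_le_mul_of_nonneg_left hlogba hq]

theorem lower_bound_at_maximum_point_general
    {n : ℕ} (p q β : ℝ) (hp : 1 < p) (hq : 1 < q) (hβ : 0 < β)
    (K Q : Euc n → ℝ) (hK : ∀ x, 0 < K x ∧ K x ≤ β) (hQ : ∀ x, 0 < Q x ∧ Q x ≤ β)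
    (u v : Euc n → ℝ) (hu : ContDiff ℝ 2 u) (hv : ContDiff ℝ 2 v)
    (hupos : ∀ x, 0 < u x) (hvpos : ∀ x, 0 < v x)
    (hequ : ∀ x, -lap u x + u x = K x * v x ^ q)
    (heqv : ∀ x, -lap v x + v x = Q x * u x ^ p)
    (humax : ∀ x, u x ≤ u 0) (hvmax : ∀ x, v x ≤ v 0) :
    β ^ (-((q+1)/(p*q-1))) ≤ u 0 ∧ β ^ (-((p+1)/(p*q-1))) ≤ v 0 := by
  have hlapu : lap u 0 ≤ 0 := IsLocalMax.lap_nonpos (Eventually.of_forall humax) hu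
  have hlapv : lap v 0 ≤ 0 := IsLocalMax.lap_nonpos (Eventually.of_forall hvmax) hv
  have huv : u 0 ≤ β * v 0 ^ q := by
    have hKv : K 0 * v 0 ^ q ≤ β * v 0 ^ q :=
      mul_le_mul_of_nonneg_right (hK 0).2 (by have := hvpos 0; positivity)
    linarith [hequ 0]
  have hvu : v 0 ≤ β * u 0 ^ p := by
    have hQu : Q 0 * u 0 ^ p ≤ β * u 0 ^ p :=
      mul_le_mul_of_nonneg_right (hQ 0).2 (by have := hupos 0; positivity)
    linarith [heqv 0]
  have hpq : 1 < p * q := by nlinarith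
  refine ⟨rpow_neg_div_le_of_le_mul_rpow (by linarith) hpq hβ (hupos 0) (hvpos 0) huv hvu, ?_⟩
  rw [mul_comm p q] at hpq ⊢
  exact rpow_neg_div_le_of_le_mul_rpow (by linarith) hpq hβ (hvpos 0) (hupos 0) hvu huv

/-- Uniform positive lower bounds at a common global maximum point of a positive solution pair:
`u(0) ≥ β^{-(q+1)/(pq-1)}` and `v(0) ≥ β^{-(p+1)/(pq-1)}`. -/
theorem lower_bound_at_maximum_point
    {n : ℕ} (hn : 1 ≤ n) (p q β : ℝ) (hp : 1 < p) (hq : 1 < q) (hβ : 0 < β)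
    (K Q : Euc n → ℝ) (hK : ∀ x, 0 < K x ∧ K x ≤ β) (hQ : ∀ x, 0 < Q x ∧ Q x ≤ β)
    (u v : Euc n → ℝ) (hu : ContDiff ℝ 2 u) (hv : ContDiff ℝ 2 v)
    (hupos : ∀ x, 0 < u x) (hvpos : ∀ x, 0 < v x)
    (hequ : ∀ x, -lap u x + u x = K x * v x ^ q)
    (heqv : ∀ x, -lap v x + v x = Q x * u x ^ p)
    (humax : ∀ x, u x ≤ u 0) (hvmax : ∀ x, v x ≤ v 0) :
    β ^ (-((q+1)/(p*q-1))) ≤ u 0 ∧ β ^ (-((p+1)/(p*q-1))) ≤ v 0 :=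
  lower_bound_at_maximum_point_general p q β hp hq hβ K Q hK hQ u v hu hv hupos hvpos hequ heqv
    humax hvmax
end
end

section
/- Let n ≥ 1, p, q > 1, let a, b ∈ C¹(ℝⁿ), and let φ, ψ be positive C² functions on ℝⁿ solving −Δφ + φ = a(x) ψ^q and −Δψ + ψ = b(x) φ^p. Then for every compactly supported C¹ vector field h : ℝⁿ → ℝⁿ one has Σ_{i,l=1}^{n} ∫ ∂_i h^l (∂_i φ ∂_l ψ + ∂_i ψ ∂_l φ) dx = ∫ (div h) (∇φ·∇ψ + φψ − (1/(q+1)) a(x) ψ^{q+1} − (1/(p+1)) b(x) φ^{p+1}) dx − ∫ h(x) · ((1/(q+1)) ∇a(x) ψ^{q+1} + (1/(p+1)) ∇b(x) φ^{p+1}) dx. -/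
open MeasureTheory Filter Topology

noncomputable section

/-- `i`-th partial derivative. -/
def pd {n : ℕ} (i : Fin n) (f : Euc n → ℝ) (x : Euc n) : ℝ :=
  fderiv ℝ f x (EuclideanSpace.single i 1)

namespace PucciSerrinAux

variable {n : ℕ} {f g : Euc n → ℝ} {x : Euc n} {i : Fin n}

lemma lap_eq (u : Euc n → ℝ) (x : Euc n) : lap u x = ∑ i, pd i (pd i u) x := rfl

lemma pd_add (hf : DifferentiableAt ℝ f x) (hg : DifferentiableAt ℝ g x) :
    pd i (fun y => f y + g y) x = pd i f x + pd i g x := by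
  unfold pd; rw [fderiv_fun_add hf hg]; rfl

lemma pd_sub (hf : DifferentiableAt ℝ f x) (hg : DifferentiableAt ℝ g x) :
    pd i (fun y => f y - g y) x = pd i f x - pd i g x := by
  unfold pd; rw [fderiv_fun_sub hf hg]; rfl

lemma pd_mul (hf : DifferentiableAt ℝ f x) (hg : DifferentiableAt ℝ g x) :
    pd i (fun y => f y * g y) x = f x * pd i g x + g x * pd i f x := by
  unfold pd; rw [fderiv_fun_mul hf hg]; rfl

lemma pd_const_mul (hg : DifferentiableAt ℝ g x) (c : ℝ) :
    pd i (fun y => c * g y) x = c * pd i g x := by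
  unfold pd; rw [fderiv_const_mul hg]; rfl

lemma pd_sum {m : ℕ} {A : Fin m → Euc n → ℝ} (hA : ∀ j, DifferentiableAt ℝ (A j) x) :
    pd i (fun y => ∑ j, A j y) x = ∑ j, pd i (A j) x := by
  unfold pd
  rw [fderiv_fun_sum (fun j _ => hA j)]
  simp

lemma pd_rpow (c : ℝ) (hf : DifferentiableAt ℝ f x) (hx : f x ≠ 0) :
    pd i (fun y => f y ^ c) x = c * f x ^ (c - 1) * pd i f x := by
  unfold pd
  rw [(hf.hasFDerivAt.rpow_const (Or.inl hx)).fderiv]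
  simp [mul_assoc]

lemma contDiff_pd {u : Euc n → ℝ} (hu : ContDiff ℝ 2 u) (i : Fin n) :
    ContDiff ℝ 1 (pd i u) := by
  have h1 : ContDiff ℝ 1 (fderiv ℝ u) := hu.fderiv_right (by norm_num)
  exact (ContinuousLinearMap.apply ℝ ℝ (EuclideanSpace.single i (1:ℝ))).contDiff.comp h1

lemma continuous_pd {u : Euc n → ℝ} (hu : ContDiff ℝ 1 u) (i : Fin n) :
    Continuous (pd i u) := by
  have h1 : Continuous (fderiv ℝ u) := hu.continuous_fderiv one_ne_zero
  exact (ContinuousLinearMap.apply ℝ ℝ (EuclideanSpace.single i (1:ℝ))).continuous.comp h1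

lemma pd_comm {u : Euc n → ℝ} (hu : ContDiff ℝ 2 u) (i l : Fin n) (x : Euc n) :
    pd i (pd l u) x = pd l (pd i u) x := by
  have hder : ∀ y, HasFDerivAt u (fderiv ℝ u y) y :=
    fun y => (hu.differentiable (by norm_num) y).hasFDerivAt
  have h1 : ContDiff ℝ 1 (fderiv ℝ u) := hu.fderiv_right (by norm_num)
  have h2 : HasFDerivAt (fderiv ℝ u) (fderiv ℝ (fderiv ℝ u) x) x :=
    ((h1.differentiable one_ne_zero) x).hasFDerivAt
  have hsymm := second_derivative_symmetric hder h2
  have key : ∀ (j : Fin n) (w : Euc n), pd j (fun y => fderiv ℝ u y w) x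
      = fderiv ℝ (fderiv ℝ u) x (EuclideanSpace.single j 1) w := by
    intro j w
    have h3 : HasFDerivAt (fun y => fderiv ℝ u y w)
        ((ContinuousLinearMap.apply ℝ ℝ w).comp (fderiv ℝ (fderiv ℝ u) x)) x :=
      (ContinuousLinearMap.apply ℝ ℝ w).hasFDerivAt.comp x h2
    unfold pd
    rw [h3.fderiv]
    rfl
  show pd i (fun y => fderiv ℝ u y (EuclideanSpace.single l 1)) x
      = pd l (fun y => fderiv ℝ u y (EuclideanSpace.single i 1)) x
  rw [key i _, key l _]
  exact hsymm _ _

lemma inner_gradient (f : Euc n → ℝ) (x v : Euc n) :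
    (inner ℝ (gradient f x) v : ℝ) = fderiv ℝ f x v := by
  rw [gradient, ← InnerProductSpace.toDual_apply_apply, LinearIsometryEquiv.apply_symm_apply]

lemma gradient_apply (f : Euc n → ℝ) (x : Euc n) (i : Fin n) :
    gradient f x i = pd i f x := by
  have := inner_gradient f x (EuclideanSpace.single i 1)
  rw [EuclideanSpace.inner_single_right] at this
  simpa [pd] using this

lemma inner_grad_grad (f g : Euc n → ℝ) (x : Euc n) :
    (inner ℝ (gradient f x) (gradient g x) : ℝ) = ∑ i, pd i f x * pd i g x := by
  rw [PiLp.inner_apply]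
  simp [RCLike.inner_apply, gradient_apply, mul_comm]

/-- Integration by parts on `ℝⁿ`. -/
lemma ibp (i : Fin n) {f g : Euc n → ℝ} (hf : ContDiff ℝ 1 f) (hg : ContDiff ℝ 1 g)
    (hgs : HasCompactSupport g) :
    ∫ x, pd i f x * g x = - ∫ x, f x * pd i g x := by
  obtain ⟨R, hR⟩ := hgs.isCompact.isBounded.subset_closedBall 0
  set χ : ContDiffBump (0 : Euc n) :=
    ⟨|R|+1, |R|+2, by positivity, by linarith⟩ with hχdef
  have hsupp_sub : tsupport g ⊆ Metric.closedBall 0 |R| :=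
    hR.trans (Metric.closedBall_subset_closedBall (le_abs_self R))
  set F : Euc n → ℝ := fun x => χ x * f x with hF
  have hFc : ContDiff ℝ 1 F := (χ.contDiff.of_le (mod_cast le_top)).mul hf
  have hFs : HasCompactSupport F := χ.hasCompactSupport.mul_right
  obtain ⟨C, hC⟩ := hFc.lipschitzWith_of_hasCompactSupport hFs one_ne_zero
  obtain ⟨D, hD⟩ := hg.lipschitzWith_of_hasCompactSupport hgs one_ne_zero
  set v : Euc n := EuclideanSpace.single i 1 with hv
  have key := LipschitzWith.integral_lineDeriv_mul_eq (μ := volume) hC hD hgs v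
  have hgd : Differentiable ℝ g := hg.differentiable one_ne_zero
  have hfd : Differentiable ℝ f := hf.differentiable one_ne_zero
  have hFd : Differentiable ℝ F := hFc.differentiable one_ne_zero
  have hL : ∀ x, lineDeriv ℝ F x v * g x = pd i f x * g x := by
    intro x
    by_cases hx : x ∈ tsupport g
    · have hball : ∀ y ∈ Metric.ball x 1, F y = f y := by
        intro y hy
        have hx' : ‖x‖ ≤ |R| := by simpa using hsupp_sub hx
        have hd : ‖y - x‖ < 1 := mem_ball_iff_norm.1 hy
        have hy' : y ∈ Metric.closedBall 0 (|R|+1) := by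
          simp only [Metric.mem_closedBall, dist_zero_right]
          calc ‖y‖ = ‖x + (y - x)‖ := by congr 1; abel
          _ ≤ ‖x‖ + ‖y - x‖ := norm_add_le _ _
          _ ≤ |R| + 1 := by linarith
        have : χ y = 1 := χ.one_of_mem_closedBall hy'
        simp [hF, this]
      have hev : F =ᶠ[𝓝 x] f :=
        eventually_of_mem (Metric.ball_mem_nhds x one_pos) hball
      rw [(hFd x).lineDeriv_eq_fderiv, hev.fderiv_eq]
      rfl
    · simp [image_eq_zero_of_notMem_tsupport hx]
  have hRr : ∀ x, lineDeriv ℝ g x (-v) * F x = -(f x * pd i g x) := by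
    intro x
    rw [(hgd x).lineDeriv_eq_fderiv, map_neg]
    by_cases hx : x ∈ tsupport g
    · have hx' : x ∈ Metric.closedBall 0 (|R|+1) :=
        Metric.closedBall_subset_closedBall (by linarith) (hsupp_sub hx)
      have : χ x = 1 := χ.one_of_mem_closedBall hx'
      simp only [hF, this, one_mul]
      show -(fderiv ℝ g x v) * f x = -(f x * pd i g x)
      unfold pd; rw [hv]; ring
    · have hev : g =ᶠ[𝓝 x] (fun _ => (0:ℝ)) :=
        eventually_of_mem ((isOpen_compl_iff.2 (isClosed_tsupport g)).mem_nhds hx)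
          (fun y hy => image_eq_zero_of_notMem_tsupport hy)
      have h0 : fderiv ℝ g x = 0 := by rw [hev.fderiv_eq]; exact fderiv_const_apply 0
      show -(fderiv ℝ g x) v * F x = -(f x * pd i g x)
      unfold pd; rw [h0]; simp
  calc ∫ x, pd i f x * g x = ∫ x, lineDeriv ℝ F x v * g x := by
        simp_rw [hL]
    _ = ∫ x, lineDeriv ℝ g x (-v) * F x := key
    _ = ∫ x, -(f x * pd i g x) := by simp_rw [hRr]
    _ = - ∫ x, f x * pd i g x := integral_neg _

end PucciSerrinAux

open PucciSerrinAux

/-- **Pucci–Serrin variational identity** for the Hamiltonian system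
`-Δφ + φ = a(x) ψ^q`, `-Δψ + ψ = b(x) φ^p`, tested with a compactly supported `C¹`
vector field `h`. -/
theorem pucci_serrin_identity
    {n : ℕ} (hn : 1 ≤ n) (p q : ℝ) (hp : 1 < p) (hq : 1 < q)
    (a b : Euc n → ℝ) (ha : ContDiff ℝ 1 a) (hb : ContDiff ℝ 1 b)
    (φ ψ : Euc n → ℝ) (hφ : ContDiff ℝ 2 φ) (hψ : ContDiff ℝ 2 ψ)
    (hφpos : ∀ x, 0 < φ x) (hψpos : ∀ x, 0 < ψ x)
    (heqφ : ∀ x, -lap φ x + φ x = a x * ψ x ^ q)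
    (heqψ : ∀ x, -lap ψ x + ψ x = b x * φ x ^ p)
    (h : Euc n → Euc n) (hh : ContDiff ℝ 1 h) (hhsupp : HasCompactSupport h) :
    (∑ i : Fin n, ∑ l : Fin n,
        ∫ x, pd i (fun y => h y l) x * (pd i φ x * pd l ψ x + pd i ψ x * pd l φ x))
      = (∫ x, (∑ i : Fin n, pd i (fun y => h y i) x) *
            ((inner ℝ (gradient φ x) (gradient ψ x) : ℝ) + φ x * ψ x
              - (1/(q+1)) * a x * ψ x ^ (q+1) - (1/(p+1)) * b x * φ x ^ (p+1)))
        - (∫ x, (inner ℝ (h x)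
            (((1/(q+1)) * ψ x ^ (q+1)) • gradient a x
              + ((1/(p+1)) * φ x ^ (p+1)) • gradient b x) : ℝ)) := by
  classical
  -- basic differentiability / continuity facts
  have hφ1 : ContDiff ℝ 1 φ := hφ.of_le (by norm_num)
  have hψ1 : ContDiff ℝ 1 ψ := hψ.of_le (by norm_num)
  have dφ : Differentiable ℝ φ := hφ1.differentiable one_ne_zero
  have dψ : Differentiable ℝ ψ := hψ1.differentiable one_ne_zero
  have da : Differentiable ℝ a := ha.differentiable one_ne_zero
  have db : Differentiable ℝ b := hb.differentiable one_ne_zero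
  have cpdφ : ∀ i, ContDiff ℝ 1 (pd i φ) := contDiff_pd hφ
  have cpdψ : ∀ i, ContDiff ℝ 1 (pd i ψ) := contDiff_pd hψ
  have dpdφ : ∀ i, Differentiable ℝ (pd i φ) := fun i => (cpdφ i).differentiable one_ne_zero
  have dpdψ : ∀ i, Differentiable ℝ (pd i ψ) := fun i => (cpdψ i).differentiable one_ne_zero
  -- components of h
  have hHc : ∀ l, ContDiff ℝ 1 (fun y => h y l) := fun l => contDiff_euclidean.mp hh l
  have hHs : ∀ l : Fin n, HasCompactSupport (fun y => h y l) := fun l =>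
    hhsupp.comp_left (g := fun v : Euc n => v l) rfl
  -- the bilinear expressions
  set A : Fin n → Fin n → Euc n → ℝ :=
    fun i l y => pd i φ y * pd l ψ y + pd i ψ y * pd l φ y with hAdef
  have hAcd : ∀ i l, ContDiff ℝ 1 (A i l) := fun i l =>
    (((cpdφ i).mul (cpdψ l)).add ((cpdψ i).mul (cpdφ l)))
  -- the Lagrangian density
  have hrψ : ContDiff ℝ 1 (fun y => ψ y ^ (q+1)) :=
    hψ1.rpow_const_of_ne (fun x => (hψpos x).ne')
  have hrφ : ContDiff ℝ 1 (fun y => φ y ^ (p+1)) :=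
    hφ1.rpow_const_of_ne (fun x => (hφpos x).ne')
  set F : Euc n → ℝ := fun y => (∑ j, pd j φ y * pd j ψ y) + φ y * ψ y
      - 1/(q+1) * a y * ψ y ^ (q+1) - 1/(p+1) * b y * φ y ^ (p+1) with hFdef
  have hFcd : ContDiff ℝ 1 F := by
    refine ((((ContDiff.sum fun j _ => (cpdφ j).mul (cpdψ j)).add (hφ1.mul hψ1)).sub
      ?_).sub ?_)
    · exact ((contDiff_const.mul ha).mul hrψ)
    · exact ((contDiff_const.mul hb).mul hrφ)
  -- integrability helpers
  have integH : ∀ (l : Fin n) (f : Euc n → ℝ), Continuous f →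
      Integrable (fun x => h x l * f x) := by
    intro l f hf
    exact (((hHc l).continuous).mul hf).integrable_of_hasCompactSupport ((hHs l).mul_right)
  have integPdH : ∀ (l : Fin n) (f : Euc n → ℝ), Continuous f →
      Integrable (fun x => pd l (fun y => h y l) x * f x) := by
    intro l f hf
    have hs : HasCompactSupport (pd l (fun y => h y l)) :=
      HasCompactSupport.fderiv_apply (𝕜 := ℝ) (hHs l) (EuclideanSpace.single l 1)
    exact ((continuous_pd (hHc l) l).mul hf).integrable_of_hasCompactSupport hs.mul_right
  -- pointwise key identity
  have key : ∀ (l : Fin n) (x : Euc n),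
      ∑ i, pd i (A i l) x = pd l F x
        + (1/(q+1) * ψ x ^ (q+1) * pd l a x + 1/(p+1) * φ x ^ (p+1) * pd l b x) := by
    intro l x
    have hlapφ := heqφ x
    have hlapψ := heqψ x
    rw [lap_eq] at hlapφ hlapψ
    -- expand the left side
    have hA : ∀ i, pd i (A i l) x
        = (pd i φ x * pd i (pd l ψ) x + pd l ψ x * pd i (pd i φ) x)
          + (pd i ψ x * pd i (pd l φ) x + pd l φ x * pd i (pd i ψ) x) := by
      intro i
      rw [hAdef]
      rw [pd_add ((dpdφ i x).fun_mul (dpdψ l x)) ((dpdψ i x).fun_mul (dpdφ l x)),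
        pd_mul (dpdφ i x) (dpdψ l x), pd_mul (dpdψ i x) (dpdφ l x),
        pd_comm hψ i l x, pd_comm hφ i l x]
    -- expand the right side
    have dS : DifferentiableAt ℝ (fun y => ∑ j, pd j φ y * pd j ψ y) x :=
      (ContDiff.sum fun j (_ : j ∈ Finset.univ) =>
        (cpdφ j).mul (cpdψ j)).differentiable one_ne_zero x
    have dP : DifferentiableAt ℝ (fun y => φ y * ψ y) x := (dφ x).mul (dψ x)
    have dQ1 : DifferentiableAt ℝ (fun y => 1/(q+1) * a y * ψ y ^ (q+1)) x :=
      (((contDiff_const.mul ha).mul hrψ).differentiable one_ne_zero) x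
    have dQ2 : DifferentiableAt ℝ (fun y => 1/(p+1) * b y * φ y ^ (p+1)) x :=
      (((contDiff_const.mul hb).mul hrφ).differentiable one_ne_zero) x
    have hqne : q + 1 ≠ 0 := by linarith
    have hpne : p + 1 ≠ 0 := by linarith
    have hSd : pd l (fun y => ∑ j, pd j φ y * pd j ψ y) x
        = ∑ j, (pd j φ x * pd j (pd l ψ) x + pd j ψ x * pd j (pd l φ) x) := by
      rw [pd_sum (fun j => (dpdφ j x).fun_mul (dpdψ j x))]
      refine Finset.sum_congr rfl fun j _ => ?_
      rw [pd_mul (dpdφ j x) (dpdψ j x), pd_comm hψ l j x, pd_comm hφ l j x]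
    have hQ1d : pd l (fun y => 1/(q+1) * a y * ψ y ^ (q+1)) x
        = 1/(q+1) * pd l a x * ψ x ^ (q+1) + a x * ψ x ^ q * pd l ψ x := by
      rw [pd_mul ((differentiableAt_const _).fun_mul (da x)) ((dψ x).rpow_const (Or.inl (hψpos x).ne')),
        pd_const_mul (da x), pd_rpow _ (dψ x) (hψpos x).ne']
      rw [show q + 1 - 1 = q by ring]
      field_simp
      ring
    have hQ2d : pd l (fun y => 1/(p+1) * b y * φ y ^ (p+1)) x
        = 1/(p+1) * pd l b x * φ x ^ (p+1) + b x * φ x ^ p * pd l φ x := by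
      rw [pd_mul ((differentiableAt_const _).fun_mul (db x)) ((dφ x).rpow_const (Or.inl (hφpos x).ne')),
        pd_const_mul (db x), pd_rpow _ (dφ x) (hφpos x).ne']
      rw [show p + 1 - 1 = p by ring]
      field_simp
      ring
    have hFd : pd l F x
        = (∑ j, (pd j φ x * pd j (pd l ψ) x + pd j ψ x * pd j (pd l φ) x))
          + (φ x * pd l ψ x + ψ x * pd l φ x)
          - (1/(q+1) * pd l a x * ψ x ^ (q+1) + a x * ψ x ^ q * pd l ψ x)
          - (1/(p+1) * pd l b x * φ x ^ (p+1) + b x * φ x ^ p * pd l φ x) := by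
      rw [hFdef]
      rw [pd_sub ((dS.fun_add dP).fun_sub dQ1) dQ2, pd_sub (dS.fun_add dP) dQ1, pd_add dS dP,
        hSd, hQ1d, hQ2d, pd_mul (dφ x) (dψ x)]
    -- combine
    simp only [hA, hFd]
    rw [Finset.sum_add_distrib, Finset.sum_add_distrib, Finset.sum_add_distrib,
      ← Finset.mul_sum, ← Finset.mul_sum]
    rw [Finset.sum_add_distrib]
    linear_combination (-pd l ψ x) * hlapφ + (-pd l φ x) * hlapψ
  -- Transform the LHS
  have lhs_eq : (∑ i : Fin n, ∑ l : Fin n,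
        ∫ x, pd i (fun y => h y l) x * (pd i φ x * pd l ψ x + pd i ψ x * pd l φ x))
      = - ∑ l : Fin n, ∫ x, h x l * (∑ i, pd i (A i l) x) := by
    have step1 : ∀ i l : Fin n,
        (∫ x, pd i (fun y => h y l) x * (pd i φ x * pd l ψ x + pd i ψ x * pd l φ x))
        = - ∫ x, h x l * pd i (A i l) x := by
      intro i l
      have h1 := ibp i (hAcd i l) (hHc l) (hHs l)
      have h2 : (∫ x, pd i (fun y => h y l) x * (pd i φ x * pd l ψ x + pd i ψ x * pd l φ x))
          = ∫ x, A i l x * pd i (fun y => h y l) x := by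
        congr 1; funext x; rw [hAdef]; ring
      rw [h2, ← neg_neg (∫ x, A i l x * pd i (fun y => h y l) x), ← h1]
      rw [show (∫ x, pd i (A i l) x * h x l) = ∫ x, h x l * pd i (A i l) x from by
        congr 1; funext x; ring]
    calc (∑ i : Fin n, ∑ l : Fin n,
        ∫ x, pd i (fun y => h y l) x * (pd i φ x * pd l ψ x + pd i ψ x * pd l φ x))
        = ∑ i : Fin n, ∑ l : Fin n, - ∫ x, h x l * pd i (A i l) x := by
          refine Finset.sum_congr rfl fun i _ => Finset.sum_congr rfl fun l _ => step1 i l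
      _ = - ∑ l : Fin n, ∑ i : Fin n, ∫ x, h x l * pd i (A i l) x := by
          simp only [Finset.sum_neg_distrib]
          rw [Finset.sum_comm]
      _ = - ∑ l : Fin n, ∫ x, h x l * (∑ i, pd i (A i l) x) := by
          congr 1
          refine Finset.sum_congr rfl fun l _ => ?_
          rw [← integral_finset_sum _ (fun i _ => integH l _ (continuous_pd (hAcd i l) i))]
          congr 1; funext x; rw [Finset.mul_sum]
  -- Transform the first RHS integral
  have rhs1 : (∫ x, (∑ i : Fin n, pd i (fun y => h y i) x) *
            ((inner ℝ (gradient φ x) (gradient ψ x) : ℝ) + φ x * ψ x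
              - (1/(q+1)) * a x * ψ x ^ (q+1) - (1/(p+1)) * b x * φ x ^ (p+1)))
      = - ∑ l : Fin n, ∫ x, h x l * pd l F x := by
    have hptw : ∀ x, (∑ i : Fin n, pd i (fun y => h y i) x) *
            ((inner ℝ (gradient φ x) (gradient ψ x) : ℝ) + φ x * ψ x
              - (1/(q+1)) * a x * ψ x ^ (q+1) - (1/(p+1)) * b x * φ x ^ (p+1))
        = ∑ l : Fin n, pd l (fun y => h y l) x * F x := by
      intro x
      rw [inner_grad_grad, ← Finset.sum_mul]
    rw [show (∫ x, (∑ i : Fin n, pd i (fun y => h y i) x) *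
            ((inner ℝ (gradient φ x) (gradient ψ x) : ℝ) + φ x * ψ x
              - (1/(q+1)) * a x * ψ x ^ (q+1) - (1/(p+1)) * b x * φ x ^ (p+1)))
        = ∫ x, ∑ l : Fin n, pd l (fun y => h y l) x * F x from by
      congr 1; funext x; exact hptw x]
    rw [integral_finset_sum _ (fun l _ => integPdH l F hFcd.continuous)]
    simp only [← Finset.sum_neg_distrib]
    refine Finset.sum_congr rfl fun l _ => ?_
    have h1 := ibp l hFcd (hHc l) (hHs l)
    have e1 : (∫ x, pd l (fun y => h y l) x * F x) = ∫ x, F x * pd l (fun y => h y l) x := by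
      congr 1; funext x; ring
    have e2 : (∫ x, pd l F x * h x l) = ∫ x, h x l * pd l F x := by
      congr 1; funext x; ring
    rw [e1, ← e2]
    linarith [h1]
  -- Transform the second RHS integral
  have rhs2 : (∫ x, (inner ℝ (h x)
            (((1/(q+1)) * ψ x ^ (q+1)) • gradient a x
              + ((1/(p+1)) * φ x ^ (p+1)) • gradient b x) : ℝ))
      = ∑ l : Fin n, ∫ x, h x l *
          (1/(q+1) * ψ x ^ (q+1) * pd l a x + 1/(p+1) * φ x ^ (p+1) * pd l b x) := by
    have hptw : ∀ x, (inner ℝ (h x)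
            (((1/(q+1)) * ψ x ^ (q+1)) • gradient a x
              + ((1/(p+1)) * φ x ^ (p+1)) • gradient b x) : ℝ)
        = ∑ l : Fin n, h x l *
          (1/(q+1) * ψ x ^ (q+1) * pd l a x + 1/(p+1) * φ x ^ (p+1) * pd l b x) := by
      intro x
      rw [PiLp.inner_apply]
      refine Finset.sum_congr rfl fun l _ => ?_
      simp only [RCLike.inner_apply', starRingEnd_apply, star_trivial, PiLp.add_apply,
        PiLp.smul_apply, smul_eq_mul, gradient_apply]
    rw [show (∫ x, (inner ℝ (h x)
            (((1/(q+1)) * ψ x ^ (q+1)) • gradient a x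
              + ((1/(p+1)) * φ x ^ (p+1)) • gradient b x) : ℝ))
        = ∫ x, ∑ l : Fin n, h x l *
          (1/(q+1) * ψ x ^ (q+1) * pd l a x + 1/(p+1) * φ x ^ (p+1) * pd l b x) from by
      congr 1; funext x; exact hptw x]
    refine integral_finset_sum _ (fun l _ => integH l _ ?_)
    exact ((continuous_const.mul hrψ.continuous).mul (continuous_pd ha l)).add
      ((continuous_const.mul hrφ.continuous).mul (continuous_pd hb l))
  -- put everything together
  rw [lhs_eq, rhs1, rhs2]
  have comb : ∀ l : Fin n, (∫ x, h x l * (∑ i, pd i (A i l) x))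
      = (∫ x, h x l * pd l F x) + ∫ x, h x l *
          (1/(q+1) * ψ x ^ (q+1) * pd l a x + 1/(p+1) * φ x ^ (p+1) * pd l b x) := by
    intro l
    rw [← integral_add (integH l _ (continuous_pd hFcd l))
      (integH l (fun x => 1/(q+1) * ψ x ^ (q+1) * pd l a x + 1/(p+1) * φ x ^ (p+1) * pd l b x)
        (((continuous_const.mul hrψ.continuous).mul (continuous_pd ha l)).add
        ((continuous_const.mul hrφ.continuous).mul (continuous_pd hb l))))]
    congr 1
    funext x
    rw [key l x]
    ring
  simp only [comb, Finset.sum_add_distrib]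
  ring
end
end
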